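/- arXiv:1303.6576 — 2 statements merged into one kernel-verified Lean document; each statement's English description precedes it below -/
import Mathlib

section
/- If every pair of elements of a magnitude space has a ratio (for all a, b there exist natural numbers m, n with m•a > b and n•b > a, where n•a denotes the n-fold sum of a), then the magnitude space is Archimedean in Hölder's sense: for any a and any nonempty subset A with an upper bound, there is ζ ∈ A with ζ + a ∉ A. -/
/-- A magnitude space: nonempty, associative, commutative `+` with trichotomy. -/
class MagnitudeSpace (M : Type*) extends Add M where
  nonempty : Nonempty M
  add_assoc' : ∀ a b c : M, a + (b + c) = (a + b) + c
  add_comm' : ∀ a b : M, a + b = b + a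
  trichotomy : ∀ a b : M,
    ((∃ d, a = b + d) ∧ a ≠ b ∧ ¬ (∃ d, b = a + d)) ∨
    (¬ (∃ d, a = b + d) ∧ a = b ∧ ¬ (∃ d, b = a + d)) ∨
    (¬ (∃ d, a = b + d) ∧ a ≠ b ∧ (∃ d, b = a + d))

variable {M : Type*}

/-- `a` is less than `b` iff `b = a + d` for some `d`. -/
def mlt [MagnitudeSpace M] (a b : M) : Prop := ∃ d, b = a + d

/-- `a ≤ b` iff `a < b` or `a = b`. -/
def mle [MagnitudeSpace M] (a b : M) : Prop := mlt a b ∨ a = b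

/-- `nsm n a` is the `(n+1)`-fold sum of `a`; as `n` ranges over `ℕ` this
gives exactly the positive integral multiples of `a`. -/
def nsm [MagnitudeSpace M] : ℕ → M → M
  | 0, a => a
  | n + 1, a => nsm n a + a


theorem mlt_irrefl [MagnitudeSpace M] (a : M) : ¬ mlt a a := by
  rcases MagnitudeSpace.trichotomy a a with ⟨_, h, _⟩ | ⟨h, _, _⟩ | ⟨_, h, _⟩ <;>
    first | exact absurd rfl h | exact h

theorem mlt_trans [MagnitudeSpace M] {a b c : M} (h1 : mlt a b) (h2 : mlt b c) :
    mlt a c := by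
  obtain ⟨d, rfl⟩ := h1
  obtain ⟨e, rfl⟩ := h2
  exact ⟨d + e, (MagnitudeSpace.add_assoc' a d e).symm⟩

theorem stmt_13 [MagnitudeSpace M]
    (hratio : ∀ a b : M, ∃ m n : ℕ, mlt b (nsm m a) ∧ mlt a (nsm n b)) :
    ∀ (a : M) (A : Set M), A.Nonempty → (∃ u : M, ∀ x ∈ A, mle x u) →
      ∃ ζ ∈ A, ζ + a ∉ A := by
  intro a A ⟨x₀, hx₀⟩ ⟨u, hu⟩
  by_contra h
  push_neg at h
  have key : ∀ n : ℕ, x₀ + nsm n a ∈ A := by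
    intro n
    induction n with
    | zero => exact h x₀ hx₀
    | succ n ih =>
      have := h _ ih
      rwa [← MagnitudeSpace.add_assoc'] at this
  obtain ⟨m, n, hm, hn⟩ := hratio a u
  -- u < nsm m a < nsm m a + x₀ = x₀ + nsm m a ≤ u
  have h1 : mlt u (x₀ + nsm m a) := by
    refine mlt_trans hm ⟨x₀, ?_⟩
    exact MagnitudeSpace.add_comm' _ _
  have h2 := hu _ (key m)
  rcases h2 with h2 | h2
  · exact mlt_irrefl u (mlt_trans h1 h2)
  · exact mlt_irrefl u (h2 ▸ h1)
end

section
/- Euclid V.8: in an Archimedean magnitude space, if a > b then a : c > b : c, i.e., there exist positive naturals m, n with m•a > n•c and m•b ≤ n•c. -/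
variable {M : Type*}

instance (priority := 100) MagnitudeSpace.toAddCommSemigroup [MagnitudeSpace M] :
    AddCommSemigroup M where
  add_assoc a b c := (MagnitudeSpace.add_assoc' a b c).symm
  add_comm := MagnitudeSpace.add_comm'

section lemmas
variable [MagnitudeSpace M]

lemma mlt_trans_s16 {x y z : M} (h1 : mlt x y) (h2 : mlt y z) : mlt x z := by
  obtain ⟨d, hd⟩ := h1; obtain ⟨e, he⟩ := h2
  exact ⟨d + e, by rw [he, hd, add_assoc]⟩

lemma mlt_add_right {x y : M} (h : mlt x y) (z : M) : mlt (x + z) (y + z) := by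
  obtain ⟨d, hd⟩ := h
  exact ⟨d, by rw [hd]; rw [add_right_comm]⟩

lemma mlt_add_left {x y : M} (h : mlt x y) (z : M) : mlt (z + x) (z + y) := by
  obtain ⟨d, hd⟩ := h
  exact ⟨d, by rw [hd, add_assoc]⟩

lemma mle_add_right {x y : M} (h : mle x y) (z : M) : mle (x + z) (y + z) := by
  rcases h with h | h
  · exact Or.inl (mlt_add_right h z)
  · exact Or.inr (by rw [h])

lemma mle_mlt_trans {x y z : M} (h1 : mle x y) (h2 : mlt y z) : mlt x z := by
  rcases h1 with h1 | rfl
  · exact mlt_trans_s16 h1 h2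
  · exact h2

lemma nsm_add (m : ℕ) (x y : M) : nsm m (x + y) = nsm m x + nsm m y := by
  induction m with
  | zero => rfl
  | succ k ih =>
    show nsm k (x + y) + (x + y) = (nsm k x + x) + (nsm k y + y)
    rw [ih]
    simp only [add_assoc, add_comm, add_left_comm]

end lemmas

theorem stmt_16 [MagnitudeSpace M]
    (harch : ∀ x y : M, ∃ n : ℕ, mlt y (nsm n x))
    (a b c : M) (hab : mlt b a) :
    ∃ m n : ℕ, mlt (nsm n c) (nsm m a) ∧
      (mlt (nsm m b) (nsm n c) ∨ nsm m b = nsm n c) := by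
  classical
  obtain ⟨d, rfl⟩ := hab
  -- choose m with c < (m+1)•d
  obtain ⟨m, hm⟩ := harch d c
  have hma : nsm m (b + d) = nsm m b + nsm m d := nsm_add m b d
  -- least n with m•b < n•c
  have hex : ∃ n : ℕ, mlt (nsm m b) (nsm n c) := harch c (nsm m b)
  let n := Nat.find hex
  have hPn : mlt (nsm m b) (nsm n c) := Nat.find_spec hex
  refine ⟨m, n, ?_, Or.inl hPn⟩
  rcases Nat.eq_zero_or_pos n with h0 | hpos
  · -- n = 0 : c < m•d < m•b + m•d = m•a
    rw [h0]
    show mlt (nsm 0 c) (nsm m (b + d))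
    rw [hma]
    exact mlt_trans_s16 hm ⟨nsm m b, by rw [add_comm]⟩
  · -- n ≥ 1 : (n-1)•c ≤ m•b, so n•c ≤ m•b + c < m•b + m•d = m•a
    obtain ⟨k, hk⟩ : ∃ k, n = k + 1 := ⟨n - 1, (Nat.succ_pred_eq_of_pos hpos).symm⟩
    rw [hk] at hPn ⊢
    have hnot : ¬ mlt (nsm m b) (nsm k c) := Nat.find_min hex (by omega)
    have hle : mle (nsm k c) (nsm m b) := by
      rcases MagnitudeSpace.trichotomy (nsm m b) (nsm k c) with ⟨h1, _, _⟩ | ⟨_, h2, _⟩ | ⟨_, _, h3⟩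
      · exact Or.inl h1
      · exact Or.inr h2.symm
      · exact absurd h3 hnot
    have h1 : mle (nsm (k + 1) c) (nsm m b + c) := by
      show mle (nsm k c + c) (nsm m b + c)
      exact mle_add_right hle c
    have h2 : mlt (nsm m b + c) (nsm m (b + d)) := by
      rw [hma]; exact mlt_add_left hm (nsm m b)
    exact mle_mlt_trans h1 h2
end
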